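/- Let T be a bounded operator that is A-self-adjoint, i.e. AT = T*A, and admits an A-adjoint (there exists a bounded W with AW = T*A), let q ∈ D, and suppose the range of A has dimension at least 2. Then |q|·‖T‖_A ≤ w_{q,A}(T) ≤ ‖T‖_A, where ‖T‖_A = sup{‖Tx‖_A : x ∈ H, ‖x‖_A ≤ 1}. -/

import Mathlib

noncomputable section

open Filter

variable {H : Type*} [NormedAddCommGroup H] [InnerProductSpace ℂ H] [CompleteSpace H]

/-- The paper's semi-inner product `⟨x, y⟩_A = ⟨A x, y⟩`, where the inner product of the
paper is linear in the *first* argument; in Mathlib's convention this is `⟪y, A x⟫_ℂ`. -/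
def sipA (A : H →L[ℂ] H) (x y : H) : ℂ := inner ℂ y (A x)

/-- The `A`-seminorm `‖x‖_A = ⟨A x, x⟩ ^ (1/2)`. -/
def semiNormA (A : H →L[ℂ] H) (x : H) : ℝ := Real.sqrt (sipA A x x).re

/-- The `A`-`q`-numerical range `W_{q,A}(T)`. -/
def WqA (A : H →L[ℂ] H) (q : ℂ) (T : H →L[ℂ] H) : Set ℂ :=
  {z | ∃ x y : H, semiNormA A x = 1 ∧ semiNormA A y = 1 ∧ sipA A x y = q ∧ z = sipA A (T x) y}

/-- The `A`-`q`-numerical radius `w_{q,A}(T)`. -/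
def wqA (A : H →L[ℂ] H) (q : ℂ) (T : H →L[ℂ] H) : ℝ := sSup ((‖·‖) '' WqA A q T)

/-- The `A`-operator seminorm `‖T‖_A = sup {‖T x‖_A : ‖x‖_A ≤ 1}`. -/
def opNormA (A T : H →L[ℂ] H) : ℝ :=
  sSup ((fun x => semiNormA A (T x)) '' {x : H | semiNormA A x ≤ 1})

/-- `T` is `A`-bounded: `‖T x‖_A ≤ c ‖x‖_A` for some `c > 0`. -/
def ABounded (A T : H →L[ℂ] H) : Prop := ∃ c > 0, ∀ x : H, semiNormA A (T x) ≤ c * semiNormA A x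

/-!
With `R = √A` one has `⟨x, y⟩_A = ⟪R y, R x⟫` and `‖x‖_A = ‖R x‖`, so everything is a statement
about the vectors `R x`, and `AT = T*A` says that `T` is symmetric for the semi-inner product:
`⟪R (T a), R b⟫ = ⟪R a, R (T b)⟫`.

Symmetry gives `‖R (T^k x)‖² ≤ ‖R x‖ ‖R (T^{2k} x)‖`; iterating along `k = 2^n` shows
`‖T x‖_A ≤ ‖T‖ ‖x‖_A`, so all the suprema involved are finite. The upper bound is Cauchy–Schwarz.
For the lower bound, polarization bounds `‖T‖_A` by `sup {|⟨T u, u⟩_A| : ‖u‖_A = 1}` because `T`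
is symmetric. Since `A` has rank at least two, every `A`-unit vector `u` has an `A`-orthonormal
partner `p`, and one of `y = q̄ u ± √(1 - |q|²) p` satisfies `⟨u, y⟩_A = q` and
`|⟨T u, y⟩_A| ≥ |q| |⟨T u, u⟩_A|`.
-/

open scoped InnerProductSpace
open RCLike ComplexConjugate

theorem le_of_forall_pow_two_pow_le_mul {a d K : ℝ} (hd : 0 ≤ d)
    (h : ∀ n : ℕ, a ^ 2 ^ n ≤ K * d ^ 2 ^ n) : a ≤ d := by
  by_contra! hda
  rcases hd.eq_or_lt with rfl | hd
  · have := h 0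
    simp only [pow_zero, pow_one, mul_zero] at this
    linarith
  have hr : 1 < a / d := (one_lt_div hd).2 hda
  obtain ⟨n, hn⟩ := pow_unbounded_of_one_lt K hr
  have : (a / d) ^ n ≤ (a / d) ^ 2 ^ n := pow_le_pow_right₀ hr.le Nat.lt_two_pow_self.le
  have : (a / d) ^ 2 ^ n ≤ K := by
    rw [div_pow, div_le_iff₀ (by positivity)]
    exact h n
  linarith

theorem norm_le_norm_add_or_norm_le_norm_sub {G : Type*} [SeminormedAddCommGroup G]
    [NormedSpace ℝ G] (x y : G) : ‖x‖ ≤ ‖x + y‖ ∨ ‖x‖ ≤ ‖x - y‖ := by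
  by_contra! h
  have := norm_add_le (x + y) (x - y)
  rw [add_add_sub_cancel, ← two_smul ℝ, norm_smul, Real.norm_two] at this
  linarith

section SemiInnerProduct

variable {𝕜 V E : Type*} [RCLike 𝕜] [NormedAddCommGroup V] [InnerProductSpace 𝕜 V]
  [NormedAddCommGroup E] [InnerProductSpace 𝕜 E] {R : V →L[𝕜] E} {T : V →L[𝕜] V}

theorem inner_apply_pow_eq (hT : ∀ a b, ⟪R (T a), R b⟫_𝕜 = ⟪R a, R (T b)⟫_𝕜) (k : ℕ) (a b : V) :
    ⟪R ((T ^ k) a), R b⟫_𝕜 = ⟪R a, R ((T ^ k) b)⟫_𝕜 := by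
  induction k generalizing a b with
  | zero => rfl
  | succ k ih =>
    rw [pow_succ, mul_apply_eq_comp, ih, hT, ← mul_apply_eq_comp, ← pow_succ', pow_succ]

theorem norm_sq_apply_pow_le (hT : ∀ a b, ⟪R (T a), R b⟫_𝕜 = ⟪R a, R (T b)⟫_𝕜) (k : ℕ) (x : V) :
    ‖R ((T ^ k) x)‖ ^ 2 ≤ ‖R x‖ * ‖R ((T ^ (2 * k)) x)‖ := by
  have h : ⟪R ((T ^ k) x), R ((T ^ k) x)⟫_𝕜 = ⟪R x, R ((T ^ (2 * k)) x)⟫_𝕜 := by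
    rw [inner_apply_pow_eq hT, two_mul, pow_add, mul_apply_eq_comp]
  rw [← inner_self_eq_norm_sq (𝕜 := 𝕜), h]
  exact re_inner_le_norm _ _

theorem norm_apply_pow_two_pow_le (hT : ∀ a b, ⟪R (T a), R b⟫_𝕜 = ⟪R a, R (T b)⟫_𝕜) (n : ℕ)
    (x : V) : ‖R (T x)‖ ^ 2 ^ n ≤ ‖R x‖ ^ (2 ^ n - 1) * ‖R ((T ^ 2 ^ n) x)‖ := by
  induction n with
  | zero => simp
  | succ n ih =>
    calc ‖R (T x)‖ ^ 2 ^ (n + 1) = (‖R (T x)‖ ^ 2 ^ n) ^ 2 := by rw [pow_succ, pow_mul]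
      _ ≤ (‖R x‖ ^ (2 ^ n - 1)) ^ 2 * ‖R ((T ^ 2 ^ n) x)‖ ^ 2 := by rw [← mul_pow]; gcongr
      _ ≤ (‖R x‖ ^ (2 ^ n - 1)) ^ 2 * (‖R x‖ * ‖R ((T ^ (2 * 2 ^ n)) x)‖) := by
        gcongr; exact norm_sq_apply_pow_le hT _ x
      _ = ‖R x‖ ^ (2 ^ (n + 1) - 1) * ‖R ((T ^ 2 ^ (n + 1)) x)‖ := by
        rw [← pow_succ', ← mul_assoc, ← pow_mul, ← pow_succ]
        congr 3
        have := Nat.one_le_two_pow (n := n)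
        rw [pow_succ]; omega

theorem norm_apply_le_opNorm_mul (hT : ∀ a b, ⟪R (T a), R b⟫_𝕜 = ⟪R a, R (T b)⟫_𝕜) (x : V) :
    ‖R (T x)‖ ≤ ‖T‖ * ‖R x‖ := by
  rcases (norm_nonneg (R x)).eq_or_lt with h0 | hpos
  · have := norm_sq_apply_pow_le hT 1 x
    rw [← h0, zero_mul, pow_one] at this
    rw [← h0, mul_zero]
    nlinarith [norm_nonneg (R (T x))]
  refine le_of_forall_pow_two_pow_le_mul (K := ‖R‖ * ‖x‖ / ‖R x‖) (by positivity) fun n => ?_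
  have hpow : ‖R ((T ^ 2 ^ n) x)‖ ≤ ‖R‖ * (‖T‖ ^ 2 ^ n * ‖x‖) :=
    (R.le_opNorm _).trans <| by
      gcongr
      exact ((T ^ 2 ^ n).le_opNorm x).trans (by gcongr; exact norm_pow_le' T (by positivity))
  calc ‖R (T x)‖ ^ 2 ^ n ≤ ‖R x‖ ^ (2 ^ n - 1) * ‖R ((T ^ 2 ^ n) x)‖ :=
        norm_apply_pow_two_pow_le hT n x
    _ ≤ ‖R x‖ ^ (2 ^ n - 1) * (‖R‖ * (‖T‖ ^ 2 ^ n * ‖x‖)) := by gcongr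
    _ = ‖R‖ * ‖x‖ / ‖R x‖ * (‖T‖ * ‖R x‖) ^ 2 ^ n := by
      rw [mul_pow, pow_sub₀ _ hpos.ne' Nat.one_le_two_pow]
      field_simp

theorem norm_inner_le_mul_sq_of_norm_eq_one {w : ℝ}
    (hw : ∀ u, ‖R u‖ = 1 → ‖⟪R u, R (T u)⟫_𝕜‖ ≤ w) (u : V) :
    ‖⟪R u, R (T u)⟫_𝕜‖ ≤ w * ‖R u‖ ^ 2 := by
  rcases eq_or_ne (R u) 0 with h0 | h0
  · simp [h0]
  have hpos : 0 < ‖R u‖ := norm_pos_iff.2 h0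
  have h := hw ((‖R u‖⁻¹ : 𝕜) • u) (by rw [map_smul]; exact norm_smul_inv_norm h0)
  rw [map_smul, map_smul, map_smul, inner_smul_left, inner_smul_right, norm_mul, norm_mul,
    RCLike.norm_conj, norm_inv, RCLike.norm_ofReal, abs_norm] at h
  calc ‖⟪R u, R (T u)⟫_𝕜‖ = ‖R u‖ ^ 2 * (‖R u‖⁻¹ * (‖R u‖⁻¹ * ‖⟪R u, R (T u)⟫_𝕜‖)) := by
        field_simp
    _ ≤ w * ‖R u‖ ^ 2 := by rw [mul_comm w]; gcongr

theorem re_inner_apply_le (hT : ∀ a b, ⟪R (T a), R b⟫_𝕜 = ⟪R a, R (T b)⟫_𝕜) {w : ℝ}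
    (hw : ∀ u, ‖⟪R u, R (T u)⟫_𝕜‖ ≤ w * ‖R u‖ ^ 2) (a b : V) :
    2 * re ⟪R a, R (T b)⟫_𝕜 ≤ w * (‖R a‖ ^ 2 + ‖R b‖ ^ 2) := by
  -- polarization; the two cross terms are conjugate by symmetry of `T`
  have hpol : ⟪R (a + b), R (T (a + b))⟫_𝕜 - ⟪R (a - b), R (T (a - b))⟫_𝕜 =
      (4 * re ⟪R a, R (T b)⟫_𝕜 : ℝ) := by
    have hcross : ⟪R b, R (T a)⟫_𝕜 = conj ⟪R a, R (T b)⟫_𝕜 := by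
      rw [← hT, inner_conj_symm]
    simp only [map_add, map_sub, inner_add_left, inner_add_right, inner_sub_left,
      inner_sub_right, hcross]
    push_cast
    linear_combination 2 * RCLike.add_conj ⟪R a, R (T b)⟫_𝕜
  have hpar : ‖R (a + b)‖ ^ 2 + ‖R (a - b)‖ ^ 2 = 2 * (‖R a‖ ^ 2 + ‖R b‖ ^ 2) := by
    simpa only [map_add, map_sub, ← sq] using parallelogram_law_with_norm 𝕜 (R a) (R b)
  have hre := congrArg re hpol
  rw [RCLike.ofReal_re] at hre
  have := (RCLike.re_le_norm (⟪R (a + b), R (T (a + b))⟫_𝕜 - ⟪R (a - b), R (T (a - b))⟫_𝕜)).trans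
    (norm_sub_le _ _) |>.trans (add_le_add (hw (a + b)) (hw (a - b)))
  rw [hre, ← mul_add, hpar] at this
  linarith

theorem norm_apply_le_of_forall_norm_inner_le (hT : ∀ a b, ⟪R (T a), R b⟫_𝕜 = ⟪R a, R (T b)⟫_𝕜)
    {w : ℝ} (hw : ∀ u, ‖R u‖ = 1 → ‖⟪R u, R (T u)⟫_𝕜‖ ≤ w) (x : V) :
    ‖R (T x)‖ ≤ w * ‖R x‖ := by
  have hw' := norm_inner_le_mul_sq_of_norm_eq_one hw
  rcases (norm_nonneg (R x)).eq_or_lt with h0 | hx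
  · simpa [← h0] using norm_apply_le_opNorm_mul hT x
  rcases (norm_nonneg (R (T x))).eq_or_lt with h1 | hTx
  · have : 0 ≤ w := nonneg_of_mul_nonneg_left ((norm_nonneg _).trans (hw' x)) (by positivity)
    rw [← h1]
    positivity
  -- `t • T x` with `t = ‖R x‖ / ‖R (T x)‖` is the vector for which polarization is tight
  set t := ‖R x‖ / ‖R (T x)‖
  have ht : t * ‖R (T x)‖ = ‖R x‖ := div_mul_cancel₀ _ hTx.ne'
  have h := re_inner_apply_le hT hw' ((t : 𝕜) • T x) x
  rw [map_smul, inner_smul_left, inner_self_eq_norm_sq_to_K, norm_smul, conj_ofReal,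
    ← ofReal_pow, ← ofReal_mul, ofReal_re, norm_ofReal, abs_of_nonneg (by positivity), ht] at h
  have h2 : ‖R x‖ * ‖R (T x)‖ ≤ ‖R x‖ * (w * ‖R x‖) := by
    have : 2 * (t * ‖R (T x)‖ ^ 2) = 2 * (‖R x‖ * ‖R (T x)‖) := by rw [← ht]; ring
    linarith
  exact le_of_mul_le_mul_left h2 hx

theorem exists_norm_eq_one_inner_eq_zero {u v : V} (hu : ‖R u‖ = 1) (hv : R v ∉ 𝕜 ∙ R u) :
    ∃ p, ‖R p‖ = 1 ∧ ⟪R u, R p⟫_𝕜 = 0 := by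
  set p₀ := v - ⟪R u, R v⟫_𝕜 • u
  have hp₀ : ⟪R u, R p₀⟫_𝕜 = 0 := by
    rw [map_sub, map_smul, inner_sub_right, inner_smul_right, inner_self_eq_norm_sq_to_K, hu]
    simp
  have hRp₀ : R p₀ ≠ 0 := fun h => hv <| by
    rw [map_sub, map_smul, sub_eq_zero] at h
    rw [h]
    exact Submodule.smul_mem _ _ (Submodule.mem_span_singleton_self _)
  refine ⟨(‖R p₀‖⁻¹ : 𝕜) • p₀, by rw [map_smul]; exact norm_smul_inv_norm hRp₀, ?_⟩
  rw [map_smul, inner_smul_right, hp₀, mul_zero]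

theorem exists_norm_eq_one_inner_eq_and_norm_mul_le {q : 𝕜} (hq : ‖q‖ ≤ 1) {u p : V}
    (hu : ‖R u‖ = 1) (hp : ‖R p‖ = 1) (hup : ⟪R u, R p⟫_𝕜 = 0) (z : E) :
    ∃ y, ‖R y‖ = 1 ∧ ⟪R y, R u⟫_𝕜 = q ∧ ‖q‖ * ‖⟪R u, z⟫_𝕜‖ ≤ ‖⟪R y, z⟫_𝕜‖ := by
  set s := √(1 - ‖q‖ ^ 2)
  have hs : s ^ 2 = 1 - ‖q‖ ^ 2 := Real.sq_sqrt (by nlinarith [norm_nonneg q])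
  have hcandidate : ∀ c : ℝ, |c| = s →
      ‖R (conj q • u + (c : 𝕜) • p)‖ = 1 ∧ ⟪R (conj q • u + (c : 𝕜) • p), R u⟫_𝕜 = q ∧
        ⟪R (conj q • u + (c : 𝕜) • p), z⟫_𝕜 = q * ⟪R u, z⟫_𝕜 + c * ⟪R p, z⟫_𝕜 := by
    intro c hc
    simp only [map_add, map_smul]
    refine ⟨?_, ?_, by simp only [inner_add_left, inner_smul_left, conj_conj, conj_ofReal]⟩
    · have hortho : ⟪conj q • R u, (c : 𝕜) • R p⟫_𝕜 = 0 := by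
        rw [inner_smul_left, inner_smul_right, hup, mul_zero, mul_zero]
      rw [← pow_eq_one_iff_of_nonneg (norm_nonneg _) two_ne_zero, sq,
        norm_add_sq_eq_norm_sq_add_norm_sq_of_inner_eq_zero _ _ hortho, norm_smul, norm_smul,
        RCLike.norm_conj, norm_ofReal, hc, hu, hp]
      linarith
    · rw [inner_add_left, inner_smul_left, inner_smul_left, conj_conj, inner_self_eq_norm_sq_to_K,
        hu, ← inner_conj_symm, hup]
      simp
  rcases norm_le_norm_add_or_norm_le_norm_sub (q * ⟪R u, z⟫_𝕜) (s * ⟪R p, z⟫_𝕜) with h | h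
  · obtain ⟨hy, hyu, hyz⟩ := hcandidate s (abs_of_nonneg (Real.sqrt_nonneg _))
    exact ⟨_, hy, hyu, by rw [hyz, ← norm_mul]; exact h⟩
  · obtain ⟨hy, hyu, hyz⟩ := hcandidate (-s) (by rw [abs_neg, abs_of_nonneg (Real.sqrt_nonneg _)])
    exact ⟨_, hy, hyu, by rw [hyz, ← norm_mul, ofReal_neg, neg_mul, ← sub_eq_add_neg]; exact h⟩

end SemiInnerProduct

section PositiveOperator

variable {A : H →L[ℂ] H}

theorem sqrt_apply_sqrt_apply (hA : A.IsPositive) (x : H) :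
    CFC.sqrt A (CFC.sqrt A x) = A x := by
  rw [← mul_apply_eq_comp, CFC.sqrt_mul_sqrt_self A ((A.nonneg_iff_isPositive).2 hA)]

theorem inner_sqrt_apply_sqrt_apply (hA : A.IsPositive) (a b : H) :
    ⟪CFC.sqrt A a, CFC.sqrt A b⟫_ℂ = ⟪a, A b⟫_ℂ := by
  rw [← ContinuousLinearMap.adjoint_inner_right, (CFC.sqrt_nonneg A).isSelfAdjoint.adjoint_eq,
    sqrt_apply_sqrt_apply hA]

theorem sipA_eq_inner_sqrt (hA : A.IsPositive) (x y : H) :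
    sipA A x y = ⟪CFC.sqrt A y, CFC.sqrt A x⟫_ℂ :=
  (inner_sqrt_apply_sqrt_apply hA y x).symm

theorem semiNormA_eq_norm_sqrt (hA : A.IsPositive) (x : H) :
    semiNormA A x = ‖CFC.sqrt A x‖ := by
  rw [semiNormA, sipA_eq_inner_sqrt hA, ← RCLike.re_to_complex, inner_self_eq_norm_sq,
    Real.sqrt_sq (norm_nonneg _)]

theorem inner_sqrt_apply_symm (hA : A.IsPositive) {T : H →L[ℂ] H}
    (hsa : A.comp T = (ContinuousLinearMap.adjoint T).comp A) (a b : H) :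
    ⟪CFC.sqrt A (T a), CFC.sqrt A b⟫_ℂ = ⟪CFC.sqrt A a, CFC.sqrt A (T b)⟫_ℂ := by
  rw [inner_sqrt_apply_sqrt_apply hA, inner_sqrt_apply_sqrt_apply hA,
    ← ContinuousLinearMap.adjoint_inner_right, ← ContinuousLinearMap.comp_apply, ← hsa,
    ContinuousLinearMap.comp_apply]

theorem exists_sqrt_apply_notMem_span (hA : A.IsPositive)
    (hrank : 2 ≤ Module.rank ℂ (LinearMap.range A.toLinearMap)) (u : H) :
    ∃ v, CFC.sqrt A v ∉ ℂ ∙ CFC.sqrt A u := by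
  by_contra! h
  have hle : LinearMap.range A.toLinearMap ≤ ℂ ∙ A u := by
    rintro _ ⟨v, rfl⟩
    obtain ⟨c, hc⟩ := Submodule.mem_span_singleton.1 (h v)
    rw [ContinuousLinearMap.coe_coe, ← sqrt_apply_sqrt_apply hA v, ← hc, map_smul,
      sqrt_apply_sqrt_apply hA]
    exact Submodule.smul_mem _ _ (Submodule.mem_span_singleton_self _)
  have hspan : Module.rank ℂ (ℂ ∙ A u) ≤ 1 := by simpa using rank_span_le (R := ℂ) {A u}
  have := hrank.trans ((Submodule.rank_mono hle).trans hspan)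
  norm_num at this

variable {T : H →L[ℂ] H} {q : ℂ}

theorem semiNormA_apply_le (hA : A.IsPositive)
    (hsa : A.comp T = (ContinuousLinearMap.adjoint T).comp A) (x : H) :
    semiNormA A (T x) ≤ ‖T‖ * semiNormA A x := by
  simpa only [semiNormA_eq_norm_sqrt hA] using
    norm_apply_le_opNorm_mul (inner_sqrt_apply_symm hA hsa) x

theorem semiNormA_apply_le_opNormA (hA : A.IsPositive)
    (hsa : A.comp T = (ContinuousLinearMap.adjoint T).comp A) {x : H} (hx : semiNormA A x ≤ 1) :
    semiNormA A (T x) ≤ opNormA A T := by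
  refine le_csSup ⟨‖T‖, ?_⟩ ⟨x, hx, rfl⟩
  rintro _ ⟨y, hy, rfl⟩
  exact (semiNormA_apply_le hA hsa y).trans (mul_le_of_le_one_right (norm_nonneg T) hy)

theorem norm_sipA_le (hA : A.IsPositive) (x y : H) :
    ‖sipA A x y‖ ≤ semiNormA A x * semiNormA A y := by
  rw [sipA_eq_inner_sqrt hA, semiNormA_eq_norm_sqrt hA, semiNormA_eq_norm_sqrt hA, mul_comm]
  exact norm_inner_le_norm _ _

theorem norm_le_wqA (hA : A.IsPositive)
    (hsa : A.comp T = (ContinuousLinearMap.adjoint T).comp A) {z : ℂ} (hz : z ∈ WqA A q T) :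
    ‖z‖ ≤ wqA A q T := by
  refine le_csSup ⟨‖T‖, ?_⟩ ⟨z, hz, rfl⟩
  rintro _ ⟨_, ⟨x, y, hx, hy, -, rfl⟩, rfl⟩
  calc _ ≤ semiNormA A (T x) * semiNormA A y := norm_sipA_le hA _ _
    _ ≤ ‖T‖ := by simpa [hx, hy] using semiNormA_apply_le hA hsa x

theorem wqA_le_opNormA (hA : A.IsPositive)
    (hsa : A.comp T = (ContinuousLinearMap.adjoint T).comp A) : wqA A q T ≤ opNormA A T := by
  refine Real.sSup_le ?_ (Real.sSup_nonneg ?_)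
  · rintro _ ⟨_, ⟨x, y, hx, hy, -, rfl⟩, rfl⟩
    calc _ ≤ semiNormA A (T x) * semiNormA A y := norm_sipA_le hA _ _
      _ ≤ opNormA A T := by rw [hy, mul_one]; exact semiNormA_apply_le_opNormA hA hsa hx.le
  · rintro _ ⟨x, -, rfl⟩
    exact Real.sqrt_nonneg _

theorem opNormA_le_of_forall_norm_sipA_le (hA : A.IsPositive)
    (hsa : A.comp T = (ContinuousLinearMap.adjoint T).comp A) {w : ℝ} (hw₀ : 0 ≤ w)
    (hw : ∀ u, semiNormA A u = 1 → ‖sipA A (T u) u‖ ≤ w) : opNormA A T ≤ w := by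
  refine Real.sSup_le ?_ hw₀
  rintro _ ⟨x, hx : semiNormA A x ≤ 1, rfl⟩
  simp only [semiNormA_eq_norm_sqrt hA, sipA_eq_inner_sqrt hA] at hw hx ⊢
  exact (norm_apply_le_of_forall_norm_inner_le (inner_sqrt_apply_symm hA hsa) hw x).trans
    (mul_le_of_le_one_right hw₀ hx)

theorem norm_mul_norm_sipA_le_wqA (hA : A.IsPositive)
    (hrank : 2 ≤ Module.rank ℂ (LinearMap.range A.toLinearMap))
    (hsa : A.comp T = (ContinuousLinearMap.adjoint T).comp A) (hq : ‖q‖ ≤ 1) {u : H}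
    (hu : semiNormA A u = 1) : ‖q‖ * ‖sipA A (T u) u‖ ≤ wqA A q T := by
  rw [semiNormA_eq_norm_sqrt hA] at hu
  obtain ⟨v, hv⟩ := exists_sqrt_apply_notMem_span hA hrank u
  obtain ⟨p, hp, hup⟩ := exists_norm_eq_one_inner_eq_zero hu hv
  obtain ⟨y, hy, hyu, hle⟩ :=
    exists_norm_eq_one_inner_eq_and_norm_mul_le hq hu hp hup (CFC.sqrt A (T u))
  rw [← sipA_eq_inner_sqrt hA, ← sipA_eq_inner_sqrt hA] at hle
  refine hle.trans (norm_le_wqA hA hsa ⟨u, y, ?_, ?_, ?_, rfl⟩)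
  · rwa [semiNormA_eq_norm_sqrt hA]
  · rwa [semiNormA_eq_norm_sqrt hA]
  · rwa [sipA_eq_inner_sqrt hA]

end PositiveOperator

theorem stmt_11_general (A : H →L[ℂ] H) (hA : A.IsPositive)
    (hrank : 2 ≤ Module.rank ℂ (LinearMap.range A.toLinearMap))
    (T : H →L[ℂ] H)
    (hsa : A.comp T = (ContinuousLinearMap.adjoint T).comp A)
    (q : ℂ) (hq : ‖q‖ ≤ 1) :
    ‖q‖ * opNormA A T ≤ wqA A q T ∧ wqA A q T ≤ opNormA A T := by
  refine ⟨?_, wqA_le_opNormA hA hsa⟩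
  have hw₀ : 0 ≤ wqA A q T := Real.sSup_nonneg (by rintro _ ⟨z, -, rfl⟩; exact norm_nonneg z)
  rcases eq_or_ne q 0 with rfl | hq₀
  · simpa using hw₀
  have hq_pos : 0 < ‖q‖ := norm_pos_iff.2 hq₀
  rw [← le_div_iff₀' hq_pos]
  refine opNormA_le_of_forall_norm_sipA_le hA hsa (div_nonneg hw₀ hq_pos.le) fun u hu => ?_
  rw [le_div_iff₀' hq_pos]
  exact norm_mul_norm_sipA_le_wqA hA hrank hsa hq hu

theorem stmt_11 (A : H →L[ℂ] H) (hA : A.IsPositive)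
    (hrank : 2 ≤ Module.rank ℂ (LinearMap.range A.toLinearMap))
    (T : H →L[ℂ] H)
    (hsa : A.comp T = (ContinuousLinearMap.adjoint T).comp A)
    (hadj : ∃ W : H →L[ℂ] H, A.comp W = (ContinuousLinearMap.adjoint T).comp A)
    (q : ℂ) (hq : ‖q‖ ≤ 1) :
    ‖q‖ * opNormA A T ≤ wqA A q T ∧ wqA A q T ≤ opNormA A T :=
  stmt_11_general A hA hrank T hsa q hq
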